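/- Let μ be a centred probability measure on ℝ with no atoms, and let F : ℝ × ℝ → ℝ be continuous with a continuous partial derivative F_s(w,s) = ∂F/∂s(w,s) such that for every w the function s ↦ F(w,s) is strictly increasing on all of ℝ, and for each s₀ > 0 the function w ↦ F_s(w, s₀)/(s₀ − w) is strictly increasing on (−∞, s₀). Assume w ↦ F(w, β_μ(w)) is μ-integrable. Then for every Rogers-admissible probability measure π with marginal μ such that F is π-integrable, one has ∫ F dπ ≤ ∫ F(w, β_μ(w)) dμ(w). -/

import Mathlib

open MeasureTheory Set

noncomputable section

/-- The set `M = {(x,y) : y ≥ 0 and y ≥ x}`. -/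
def MSet : Set (ℝ × ℝ) := {p : ℝ × ℝ | 0 ≤ p.2 ∧ p.1 ≤ p.2}

/-- A probability measure on `ℝ` is centred if the identity is integrable with mean `0`. -/
def Centred (μ : Measure ℝ) : Prop :=
  Integrable (fun x : ℝ => x) μ ∧ (∫ x, x ∂μ) = 0

/-- Strict supermodularity of a bivariate function. -/
def StrictlySupermodular (F : ℝ × ℝ → ℝ) : Prop :=
  ∀ w₁ w₂ s₁ s₂ : ℝ, w₁ < w₂ → s₁ < s₂ →
    F (w₁, s₂) + F (w₂, s₁) < F (w₁, s₁) + F (w₂, s₂)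

/-- `F` is serrated with ridge `a : ℝ → EReal`: for every `w`, `s ↦ F (w, s)` is
strictly increasing on `{s | s < a w}` and strictly decreasing on `{s | a w < s}`. -/
def SerratedWithRidge (F : ℝ × ℝ → ℝ) (a : ℝ → EReal) : Prop :=
  ∀ w : ℝ,
    StrictMonoOn (fun s : ℝ => F (w, s)) {s : ℝ | (s : EReal) < a w} ∧
    StrictAntiOn (fun s : ℝ => F (w, s)) {s : ℝ | a w < (s : EReal)}

/-- Rogers' conditions for `π` to be the joint law of the terminal value and the
running maximum of a UI martingale started at `0` with terminal law `μ`. -/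
def RogersAdmissible (μ : Measure ℝ) (π : Measure (ℝ × ℝ)) : Prop :=
  Integrable (fun p : ℝ × ℝ => p.1) π ∧
  (∫ p : ℝ × ℝ, p.1 ∂π) = 0 ∧
  π MSetᶜ = 0 ∧
  (∀ s : ℝ, 0 ≤ s →
    s * (π {p : ℝ × ℝ | s ≤ p.2}).toReal ≤ ∫ p in {p : ℝ × ℝ | s ≤ p.2}, p.1 ∂π) ∧
  Measure.map Prod.fst π = μ

/-- The barycenter function of `μ`. -/
def barycenter (μ : Measure ℝ) (w : ℝ) : ℝ :=
  if 0 < (μ (Ici w)).toReal then (∫ x in Ici w, x ∂μ) / (μ (Ici w)).toReal else w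

/-- `g(w) = min(β_μ(w), max(a(w), 0, w))`, the max computed in `EReal`. -/
def ridgeG (μ : Measure ℝ) (a : ℝ → EReal) (w : ℝ) : ℝ :=
  (min ((barycenter μ w : ℝ) : EReal) (max (a w) (max (0 : EReal) ((w : ℝ) : EReal)))).toReal

/-!
Write `g = β_μ`. By the fundamental theorem of calculus,
`F (x, y) - F (x, g x) = ∫ ε(g x, y, s) F_s(x, s) ds`, where `ε(a, b, ·)` is `1` on `(a, b]`
and `-1` on `(b, a]`; by Fubini it therefore suffices that every slice
`∫ ε(g x, y, s) F_s(x, s) dπ` is nonpositive. For `s ≤ 0` this holds because `g ≥ 0`.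
For `s > 0` let `α` be the point where `g` crosses the level `s` and `λ = F_s(α, s) / (s - α)`.
Monotonicity of `w ↦ F_s(w, s) / (s - w)` gives
`ε F_s(x, s) ≤ λ (𝟙{s ≤ y} - 𝟙{s < g x}) (s - x)`. Rogers' condition (iv) makes the
`π`-integral of the first term nonpositive, and the second term integrates to
`∫_{[α, ∞)} (s - x) dμ = 0`: since `μ` has no atoms, `w ↦ μ([w, ∞)) (β_μ(w) - s)` is continuous,
and it changes sign at `α`. If `α = s`, the same identity shows that `μ` has no mass on `(s, ∞)`,
so `π` has none on `{y ≥ s}`.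
-/

open Filter Topology
open scoped Interval

section Barycenter

variable {μ : Measure ℝ}

lemma barycenter_of_measureReal_eq_zero {w : ℝ} (h : μ.real (Ici w) = 0) :
    barycenter μ w = w := by
  simp [barycenter, ← measureReal_def, h]

variable [IsFiniteMeasure μ]

lemma setIntegral_Ici_eq_measureReal_mul_barycenter (w : ℝ) :
    ∫ x in Ici w, x ∂μ = μ.real (Ici w) * barycenter μ w := by
  rcases (measureReal_nonneg : 0 ≤ μ.real (Ici w)).eq_or_lt with h | h
  · rw [← h, zero_mul, Measure.restrict_eq_zero.2 ((measureReal_eq_zero_iff).1 h.symm),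
      integral_zero_measure]
  · rw [barycenter, ← measureReal_def, if_pos h, mul_div_cancel₀ _ h.ne']

lemma setIntegral_Ici_sub_eq_measureReal_mul (hμ : Integrable (fun x : ℝ => x) μ) (w s : ℝ) :
    ∫ x in Ici w, (x - s) ∂μ = μ.real (Ici w) * (barycenter μ w - s) := by
  rw [integral_sub hμ.integrableOn (integrableOn_const (measure_ne_top μ _)),
    setIntegral_Ici_eq_measureReal_mul_barycenter, setIntegral_const, smul_eq_mul]
  ring

lemma self_le_barycenter (hμ : Integrable (fun x : ℝ => x) μ) (w : ℝ) : w ≤ barycenter μ w := by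
  rcases (measureReal_nonneg : 0 ≤ μ.real (Ici w)).eq_or_lt with h | h
  · exact (barycenter_of_measureReal_eq_zero h.symm).ge
  · have hint : 0 ≤ ∫ x in Ici w, (x - w) ∂μ :=
      setIntegral_nonneg measurableSet_Ici fun x hx => sub_nonneg.2 hx
    rw [setIntegral_Ici_sub_eq_measureReal_mul hμ] at hint
    exact sub_nonneg.1 (nonneg_of_mul_nonneg_right hint h)

lemma monotone_barycenter (hμ : Integrable (fun x : ℝ => x) μ) : Monotone (barycenter μ) := by
  intro w₁ w₂ hw
  rcases (measureReal_nonneg : 0 ≤ μ.real (Ici w₁)).eq_or_lt with h | h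
  · rw [barycenter_of_measureReal_eq_zero h.symm]
    exact hw.trans (self_le_barycenter hμ w₂)
  · set b := barycenter μ w₂
    have hint : ∫ x in Ici w₁, (x - b) ∂μ ≤ 0 := by
      have hf : Integrable (fun x => x - b) μ := hμ.sub (integrable_const b)
      rw [← Ico_union_Ici_eq_Ici hw, setIntegral_union
        ((Iio_disjoint_Ici le_rfl).mono_left Ico_subset_Iio_self) measurableSet_Ici
        hf.integrableOn hf.integrableOn, setIntegral_Ici_sub_eq_measureReal_mul hμ, sub_self,
        mul_zero, add_zero]
      exact setIntegral_nonpos measurableSet_Ico fun x hx =>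
        sub_nonpos.2 (hx.2.le.trans (self_le_barycenter hμ w₂))
    rw [setIntegral_Ici_sub_eq_measureReal_mul hμ] at hint
    exact sub_nonpos.1 (nonpos_of_mul_nonpos_right hint h)

lemma tendsto_barycenter_atBot [IsProbabilityMeasure μ] (hμ : Integrable (fun x : ℝ => x) μ) :
    Tendsto (barycenter μ) atBot (𝓝 (∫ x, x ∂μ)) := by
  have hI : Tendsto (fun w => ∫ x in Ici w, x ∂μ) atBot (𝓝 (∫ x, x ∂μ)) :=
    (aecover_Ici tendsto_id).integral_tendsto_of_countably_generated hμ
  have hm : Tendsto (fun w => μ.real (Ici w)) atBot (𝓝 1) := by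
    simpa [measureReal_def, Function.comp_def] using
      (ENNReal.tendsto_toReal (measure_ne_top μ univ)).comp (tendsto_measure_Ici_atBot μ)
  refine (div_one (∫ x, x ∂μ) ▸ hI.div hm one_ne_zero).congr' ?_
  filter_upwards [hm.eventually (lt_mem_nhds one_pos)] with w hw
  rw [Pi.div_apply, setIntegral_Ici_eq_measureReal_mul_barycenter, mul_div_cancel_left₀ _ hw.ne']

end Barycenter

lemma barycenter_nonneg {μ : Measure ℝ} [IsProbabilityMeasure μ] (hμ : Centred μ) (w : ℝ) :
    0 ≤ barycenter μ w :=
  hμ.2 ▸ (monotone_barycenter hμ.1).le_of_tendsto (tendsto_barycenter_atBot hμ.1) w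

lemma exists_Ioi_subset_setOf_lt_barycenter_subset_Ici {μ : Measure ℝ} [IsProbabilityMeasure μ]
    (hμ : Centred μ) {s : ℝ} (hs : 0 < s) :
    ∃ α ≤ s, Ioi α ⊆ {x | s < barycenter μ x} ∧ {x | s < barycenter μ x} ⊆ Ici α := by
  set T := {x | s < barycenter μ x}
  have hsT : Ioi s ⊆ T := fun x hx => lt_of_lt_of_le hx (self_le_barycenter hμ.1 x)
  obtain ⟨w₀, hw₀⟩ := eventually_atBot.1
    ((tendsto_barycenter_atBot hμ.1).eventually (gt_mem_nhds (hμ.2 ▸ hs)))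
  have hbdd : BddBelow T := ⟨w₀, fun x hx => le_of_not_ge fun hxw => (hw₀ x hxw).not_gt hx⟩
  have hne : T.Nonempty := (nonempty_Ioi (a := s)).mono hsT
  refine ⟨sInf T, ?_, fun x hx => ?_, fun x hx => csInf_le hbdd hx⟩
  · simpa using csInf_le_csInf hbdd nonempty_Ioi hsT
  · obtain ⟨t, ht, htx⟩ := exists_lt_of_csInf_lt hne hx
    exact lt_of_lt_of_le ht (monotone_barycenter hμ.1 htx.le)

lemma setIntegral_Ici_sub_eq_zero {μ : Measure ℝ} [IsFiniteMeasure μ] [NullSingletonClass μ]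
    (hμ : Integrable (fun x : ℝ => x) μ) {s α : ℝ} (hup : Ioi α ⊆ {x | s < barycenter μ x})
    (hdown : {x | s < barycenter μ x} ⊆ Ici α) :
    ∫ x in Ici α, (x - s) ∂μ = 0 := by
  have hcont : ContinuousAt (fun w => ∫ x in Ici w, (x - s) ∂μ) α :=
    ((hμ.sub (integrable_const s)).integrableOn.continuousOn_Ici_primitive_Ici
      (a₀ := α - 1)).continuousAt (Ici_mem_nhds (by linarith))
  have hright : ∀ w ∈ Ioi α, 0 ≤ ∫ x in Ici w, (x - s) ∂μ := fun w hw => by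
    rw [setIntegral_Ici_sub_eq_measureReal_mul hμ]
    exact mul_nonneg measureReal_nonneg (sub_nonneg.2 (hup hw).le)
  have hleft : ∀ w ∈ Iio α, ∫ x in Ici w, (x - s) ∂μ ≤ 0 := fun w hw => by
    rw [setIntegral_Ici_sub_eq_measureReal_mul hμ]
    exact mul_nonpos_of_nonneg_of_nonpos measureReal_nonneg
      (sub_nonpos.2 (not_lt.1 fun h => not_le.2 hw (mem_Ici.1 (hdown h))))
  exact le_antisymm
    (le_of_tendsto (hcont.tendsto.mono_left nhdsWithin_le_nhds)
      (eventually_nhdsWithin_of_forall hleft))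
    (ge_of_tendsto (hcont.tendsto.mono_left nhdsWithin_le_nhds)
      (eventually_nhdsWithin_of_forall hright))

lemma measure_eq_zero_of_setIntegral_nonpos {X : Type*} [MeasurableSpace X] {ν : Measure X}
    {A : Set X} {f : X → ℝ} (hf : IntegrableOn f A ν) (hpos : ∀ᵐ x ∂ν.restrict A, 0 < f x)
    (hle : ∫ x in A, f x ∂ν ≤ 0) : ν A = 0 := by
  have hnonneg : 0 ≤ᵐ[ν.restrict A] f := hpos.mono fun x hx => hx.le
  have hzero : f =ᵐ[ν.restrict A] 0 := (integral_eq_zero_iff_of_nonneg_ae hnonneg hf).1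
    (le_antisymm hle (integral_nonneg_of_ae hnonneg))
  have hfalse : ∀ᵐ x ∂ν.restrict A, False := (hpos.and hzero).mono fun x hx => hx.1.ne' hx.2
  rwa [eventually_false_iff_eq_bot, ae_eq_bot, Measure.restrict_eq_zero] at hfalse

def orientedIndicator (a b s : ℝ) : ℝ :=
  if a < s ∧ s ≤ b then 1 else if b < s ∧ s ≤ a then -1 else 0

section OrientedIndicator

lemma orientedIndicator_nonpos {a b s : ℝ} (h : ¬(a < s ∧ s ≤ b)) :
    orientedIndicator a b s ≤ 0 := by
  unfold orientedIndicator
  split_ifs <;> norm_num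

lemma Measurable.orientedIndicator {X : Type*} [MeasurableSpace X] {a b c : X → ℝ}
    (ha : Measurable a) (hb : Measurable b) (hc : Measurable c) :
    Measurable fun x => _root_.orientedIndicator (a x) (b x) (c x) :=
  Measurable.ite ((measurableSet_lt ha hc).inter (measurableSet_le hc hb)) measurable_const
    (Measurable.ite ((measurableSet_lt hb hc).inter (measurableSet_le hc ha)) measurable_const
      measurable_const)

variable {a b : ℝ} {f : ℝ → ℝ}

lemma orientedIndicator_mul_eq (s : ℝ) :
    orientedIndicator a b s * f s = (Ioc a b).indicator f s - (Ioc b a).indicator f s := by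
  simp only [orientedIndicator, indicator_apply, mem_Ioc]
  split_ifs <;> grind

lemma norm_orientedIndicator_mul {s : ℝ} (hf : 0 ≤ f s) :
    ‖orientedIndicator a b s * f s‖ = (Ι a b).indicator f s := by
  classical
  rw [indicator_apply, orientedIndicator]
  split_ifs <;> simp_all [abs_of_nonneg hf, mem_uIoc]
  grind

variable {μ : Measure ℝ}

lemma integral_orientedIndicator_mul (hf : IntervalIntegrable f μ a b) :
    ∫ s, orientedIndicator a b s * f s ∂μ = ∫ s in a..b, f s ∂μ := by
  simp_rw [orientedIndicator_mul_eq]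
  rw [integral_sub (hf.1.integrable_indicator measurableSet_Ioc)
    (hf.2.integrable_indicator measurableSet_Ioc), integral_indicator measurableSet_Ioc,
    integral_indicator measurableSet_Ioc, intervalIntegral]

lemma integral_norm_orientedIndicator_mul (hf : ∀ s, 0 ≤ f s) :
    ∫ s, ‖orientedIndicator a b s * f s‖ ∂μ = |∫ s in a..b, f s ∂μ| := by
  simp_rw [norm_orientedIndicator_mul (hf _)]
  rw [integral_indicator measurableSet_uIoc, intervalIntegral.abs_integral_eq_abs_integral_uIoc,
    abs_of_nonneg (setIntegral_nonneg measurableSet_uIoc fun s _ => hf s)]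

end OrientedIndicator

lemma orientedIndicator_mul_le {g φ : ℝ → ℝ} {α s x y : ℝ} (hαs : α < s) (hφ : ∀ w, 0 ≤ φ w)
    (hratio : MonotoneOn (fun w => φ w / (s - w)) (Iio s)) (hxg : x ≤ g x) (hxy : x ≤ y)
    (hup : α < x → s < g x) (hdown : s < g x → α ≤ x) :
    orientedIndicator (g x) y s * φ x ≤
      φ α / (s - α) * ((if s ≤ y then s - x else 0) - (if s < g x then s - x else 0)) := by
  have hslope : 0 ≤ φ α / (s - α) := div_nonneg (hφ α) (sub_pos.2 hαs).le
  by_cases hA : g x < s ∧ s ≤ y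
  · have hxs : x < s := hxg.trans_lt hA.1
    have hratio_le := hratio hxs hαs (not_lt.1 fun h => (hup h).not_gt hA.1)
    rw [div_le_iff₀ (sub_pos.2 hxs)] at hratio_le
    rw [orientedIndicator, if_pos hA, if_pos hA.2, if_neg hA.1.not_gt]
    linarith
  by_cases hB : y < s ∧ s < g x
  · have hxs : x < s := hxy.trans_lt hB.1
    have hratio_le := hratio hαs hxs (hdown hB.2)
    rw [le_div_iff₀ (sub_pos.2 hxs)] at hratio_le
    rw [orientedIndicator, if_neg hA, if_pos ⟨hB.1, hB.2.le⟩, if_neg hB.1.not_ge, if_pos hB.2]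
    linarith
  calc orientedIndicator (g x) y s * φ x ≤ 0 :=
        mul_nonpos_of_nonpos_of_nonneg (orientedIndicator_nonpos hA) (hφ x)
    _ ≤ _ := mul_nonneg hslope (by split_ifs <;> grind)

section Slice

variable {μ : Measure ℝ} {π : Measure (ℝ × ℝ)} [IsFiniteMeasure π] {φ : ℝ → ℝ} {s : ℝ}

lemma RogersAdmissible.setIntegral_sub_fst_nonpos (hπ : RogersAdmissible μ π) (hs : 0 ≤ s) :
    ∫ p in {p : ℝ × ℝ | s ≤ p.2}, (s - p.1) ∂π ≤ 0 := by
  rw [integral_sub (integrable_const s).integrableOn hπ.1.integrableOn, setIntegral_const,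
    smul_eq_mul, measureReal_def]
  linarith [hπ.2.2.2.1 s hs]

lemma integral_orientedIndicator_mul_nonpos_of_measure_Ici_eq_zero (hπ : RogersAdmissible μ π)
    (hs : 0 ≤ s) (hμs : μ (Ici s) = 0) (hφ : ∀ w, 0 ≤ φ w) (g : ℝ → ℝ) :
    ∫ p, orientedIndicator (g p.1) p.2 s * φ p.1 ∂π ≤ 0 := by
  have hfst : ∀ᵐ p ∂π, p.1 < s := by
    rw [ae_iff]
    simp_rw [not_lt]
    change π (Prod.fst ⁻¹' Ici s) = 0
    rwa [← Measure.map_apply measurable_fst measurableSet_Ici, hπ.2.2.2.2]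
  have hsnd : π {p : ℝ × ℝ | s ≤ p.2} = 0 :=
    measure_eq_zero_of_setIntegral_nonpos ((integrable_const s).sub hπ.1).integrableOn
      (ae_restrict_of_ae (hfst.mono fun p hp => sub_pos.2 hp))
      (hπ.setIntegral_sub_fst_nonpos hs)
  refine integral_nonpos_of_ae ?_
  filter_upwards [measure_eq_zero_iff_ae_notMem.1 hsnd] with p hp
  exact mul_nonpos_of_nonpos_of_nonneg (orientedIndicator_nonpos fun h => hp h.2) (hφ _)

variable [IsProbabilityMeasure μ] [NullSingletonClass μ]

lemma integral_orientedIndicator_barycenter_mul_nonpos_of_lt (hμ : Integrable (fun x : ℝ => x) μ)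
    (hπ : RogersAdmissible μ π) (hs : 0 ≤ s) {α : ℝ} (hαs : α < s)
    (hup : Ioi α ⊆ {x | s < barycenter μ x}) (hdown : {x | s < barycenter μ x} ⊆ Ici α)
    (hφ : ∀ w, 0 ≤ φ w) (hratio : MonotoneOn (fun w => φ w / (s - w)) (Iio s)) :
    ∫ p, orientedIndicator (barycenter μ p.1) p.2 s * φ p.1 ∂π ≤ 0 := by
  by_cases hint : Integrable (fun p => orientedIndicator (barycenter μ p.1) p.2 s * φ p.1) π
  swap
  · rw [integral_undef hint]
  have hmap : π.map Prod.fst = μ := hπ.2.2.2.2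
  set T := {x | s < barycenter μ x}
  have hT : MeasurableSet T := (monotone_barycenter hμ).measurable measurableSet_Ioi
  have hS : MeasurableSet {p : ℝ × ℝ | s ≤ p.2} := measurable_snd measurableSet_Ici
  set e₁ : ℝ × ℝ → ℝ := {p | s ≤ p.2}.indicator fun p => s - p.1
  set e₂ : ℝ → ℝ := T.indicator fun x => s - x
  have he₁ : Integrable e₁ π := ((integrable_const s).sub hπ.1).indicator hS
  have he₂ : Integrable (fun p : ℝ × ℝ => e₂ p.1) π :=
    ((integrable_const s).sub hπ.1).indicator (measurable_fst hT)
  have he₂_zero : ∫ p, e₂ p.1 ∂π = 0 := by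
    rw [← integral_map measurable_fst.aemeasurable (hmap ▸
        ((measurable_const.sub measurable_id).indicator hT).aestronglyMeasurable), hmap,
      integral_indicator hT, setIntegral_congr_set ((hdown.eventuallyLE).antisymm
        ((Ioi_ae_eq_Ici.symm.le).trans hup.eventuallyLE)), ← neg_eq_zero, ← integral_neg]
    simpa using setIntegral_Ici_sub_eq_zero hμ hup hdown
  calc ∫ p, orientedIndicator (barycenter μ p.1) p.2 s * φ p.1 ∂π
      ≤ ∫ p, φ α / (s - α) * (e₁ p - e₂ p.1) ∂π := by
        refine integral_mono_ae hint ((he₁.sub he₂).const_mul _) ?_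
        filter_upwards [hπ.2.2.1] with p hp
        exact orientedIndicator_mul_le hαs hφ hratio (self_le_barycenter hμ _) hp.2
          (fun h => hup h) (fun h => hdown h)
    _ = φ α / (s - α) * ∫ p in {p : ℝ × ℝ | s ≤ p.2}, (s - p.1) ∂π := by
        rw [integral_const_mul, integral_sub he₁ he₂, he₂_zero, sub_zero, integral_indicator hS]
    _ ≤ 0 := mul_nonpos_of_nonneg_of_nonpos (div_nonneg (hφ α) (sub_pos.2 hαs).le)
        (hπ.setIntegral_sub_fst_nonpos hs)

lemma integral_orientedIndicator_barycenter_mul_nonpos (hμ : Centred μ)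
    (hπ : RogersAdmissible μ π) (hs : 0 < s) (hφ : ∀ w, 0 ≤ φ w)
    (hratio : MonotoneOn (fun w => φ w / (s - w)) (Iio s)) :
    ∫ p, orientedIndicator (barycenter μ p.1) p.2 s * φ p.1 ∂π ≤ 0 := by
  obtain ⟨α, hαs, hup, hdown⟩ := exists_Ioi_subset_setOf_lt_barycenter_subset_Ici hμ hs
  rcases hαs.lt_or_eq with hαs | rfl
  · exact integral_orientedIndicator_barycenter_mul_nonpos_of_lt hμ.1 hπ hs.le hαs hup hdown hφ
      hratio
  · have hμα : μ (Ioi α) = 0 :=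
      measure_eq_zero_of_setIntegral_nonpos (f := fun x => x - α)
        (hμ.1.sub (integrable_const α)).integrableOn
        ((ae_restrict_mem measurableSet_Ioi).mono fun x hx => sub_pos.2 hx)
        (by rw [← integral_Ici_eq_integral_Ioi, setIntegral_Ici_sub_eq_zero hμ.1 hup hdown])
    exact integral_orientedIndicator_mul_nonpos_of_measure_Ici_eq_zero hπ hs.le
      (by rwa [← measure_congr Ioi_ae_eq_Ici]) hφ _

end Slice

lemma integrable_prod_orientedIndicator_mul {X : Type*} [MeasurableSpace X] {ν : Measure X}
    [SFinite ν] {a b : X → ℝ} {f : X → ℝ → ℝ} (ha : Measurable a) (hb : Measurable b)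
    (hf : Measurable (Function.uncurry f)) (hf_nonneg : ∀ x s, 0 ≤ f x s)
    (hfi : ∀ x, IntervalIntegrable (f x) volume (a x) (b x))
    (hint : Integrable (fun x => ∫ s in a x..b x, f x s) ν) :
    Integrable (fun q : X × ℝ => orientedIndicator (a q.1) (b q.1) q.2 * f q.1 q.2)
      (ν.prod volume) := by
  have hmeas : Measurable fun q : X × ℝ => orientedIndicator (a q.1) (b q.1) q.2 * f q.1 q.2 :=
    ((ha.comp measurable_fst).orientedIndicator (hb.comp measurable_fst) measurable_snd).mul hf
  refine (integrable_prod_iff hmeas.aestronglyMeasurable).2 ⟨ae_of_all _ fun x => ?_, ?_⟩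
  · simp_rw [orientedIndicator_mul_eq]
    exact ((hfi x).1.integrable_indicator measurableSet_Ioc).sub
      ((hfi x).2.integrable_indicator measurableSet_Ioc)
  · simp_rw [integral_norm_orientedIndicator_mul (hf_nonneg _)]
    exact hint.abs

lemma integral_sub_eq_integral_integral_orientedIndicator {ν : Measure (ℝ × ℝ)} [SFinite ν]
    {F Fs : ℝ × ℝ → ℝ} {a : ℝ → ℝ} (ha : Measurable a)
    (hderiv : ∀ w s : ℝ, HasDerivAt (fun t : ℝ => F (w, t)) (Fs (w, s)) s)
    (hFs_cont : Continuous Fs) (hFs : ∀ p, 0 ≤ Fs p) (hF : Integrable F ν)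
    (hFa : Integrable (fun p : ℝ × ℝ => F (p.1, a p.1)) ν) :
    ∫ p, F p ∂ν - ∫ p, F (p.1, a p.1) ∂ν =
      ∫ s, ∫ p, orientedIndicator (a p.1) p.2 s * Fs (p.1, s) ∂ν := by
  have hFsi (w b c : ℝ) : IntervalIntegrable (fun t => Fs (w, t)) volume b c :=
    (hFs_cont.comp (continuous_const.prodMk continuous_id)).intervalIntegrable b c
  have hFTC (p : ℝ × ℝ) : F p - F (p.1, a p.1) = ∫ s in a p.1..p.2, Fs (p.1, s) :=
    (intervalIntegral.integral_eq_sub_of_hasDerivAt (fun t _ => hderiv p.1 t) (hFsi _ _ _)).symm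
  have hK : Integrable (fun q : (ℝ × ℝ) × ℝ => orientedIndicator (a q.1.1) q.1.2 q.2 *
      Fs (q.1.1, q.2)) (ν.prod volume) :=
    integrable_prod_orientedIndicator_mul (ν := ν) (a := fun p => a p.1) (b := Prod.snd)
      (f := fun p s => Fs (p.1, s)) (ha.comp measurable_fst) measurable_snd
      (hFs_cont.measurable.comp ((measurable_fst.comp measurable_fst).prodMk measurable_snd))
      (fun _ _ => hFs _) (fun _ => hFsi _ _ _) ((hF.sub hFa).congr (ae_of_all _ hFTC))
  rw [← integral_sub hF hFa, ← integral_integral_swap hK]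
  simp_rw [hFTC, integral_orientedIndicator_mul (hFsi _ _ _)]

theorem azemaYor_optimal_HK_general (μ : Measure ℝ) [IsProbabilityMeasure μ] [NullSingletonClass μ]
    (hμ : Centred μ)
    (F Fs : ℝ × ℝ → ℝ)
    (hderiv : ∀ w s : ℝ, HasDerivAt (fun t : ℝ => F (w, t)) (Fs (w, s)) s)
    (hFs_cont : Continuous Fs)
    (hinc : ∀ w : ℝ, StrictMono (fun s : ℝ => F (w, s)))
    (hratio : ∀ s₀ : ℝ, 0 < s₀ →
      StrictMonoOn (fun w : ℝ => Fs (w, s₀) / (s₀ - w)) (Iio s₀))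
    (hint : Integrable (fun w : ℝ => F (w, barycenter μ w)) μ)
    (π : Measure (ℝ × ℝ)) [IsProbabilityMeasure π]
    (hπ : RogersAdmissible μ π) (hFπ : Integrable F π) :
    (∫ p, F p ∂π) ≤ ∫ w, F (w, barycenter μ w) ∂μ := by
  set g := barycenter μ
  have hmap : π.map Prod.fst = μ := hπ.2.2.2.2
  have hFs : ∀ p, 0 ≤ Fs p := fun p => (hderiv p.1 p.2).deriv ▸ (hinc p.1).monotone.deriv_nonneg
  have hslice (s : ℝ) : ∫ p, orientedIndicator (g p.1) p.2 s * Fs (p.1, s) ∂π ≤ 0 := by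
    rcases le_or_gt s 0 with hs | hs
    · exact integral_nonpos fun p => mul_nonpos_of_nonpos_of_nonneg
        (orientedIndicator_nonpos fun h => (barycenter_nonneg hμ _).not_gt (h.1.trans_le hs))
        (hFs _)
    · exact integral_orientedIndicator_barycenter_mul_nonpos hμ hπ hs (fun _ => hFs _)
        (hratio s hs).monotoneOn
  rw [← sub_nonpos, ← hmap, integral_map measurable_fst.aemeasurable
    (hmap ▸ hint.aestronglyMeasurable), integral_sub_eq_integral_integral_orientedIndicator
    (monotone_barycenter hμ.1).measurable hderiv hFs_cont hFs hFπ
    ((hmap ▸ hint).comp_measurable measurable_fst)]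
  exact integral_nonpos hslice

/-- Azéma–Yor optimality under the Hobson–Klimmek derivative condition. -/
theorem azemaYor_optimal_HK (μ : Measure ℝ) [IsProbabilityMeasure μ] [NullSingletonClass μ]
    (hμ : Centred μ)
    (F Fs : ℝ × ℝ → ℝ) (hFc : Continuous F)
    (hderiv : ∀ w s : ℝ, HasDerivAt (fun t : ℝ => F (w, t)) (Fs (w, s)) s)
    (hFs_cont : Continuous Fs)
    (hinc : ∀ w : ℝ, StrictMono (fun s : ℝ => F (w, s)))
    (hratio : ∀ s₀ : ℝ, 0 < s₀ →
      StrictMonoOn (fun w : ℝ => Fs (w, s₀) / (s₀ - w)) (Iio s₀))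
    (hint : Integrable (fun w : ℝ => F (w, barycenter μ w)) μ)
    (π : Measure (ℝ × ℝ)) [IsProbabilityMeasure π]
    (hπ : RogersAdmissible μ π) (hFπ : Integrable F π) :
    (∫ p, F p ∂π) ≤ ∫ w, F (w, barycenter μ w) ∂μ :=
  azemaYor_optimal_HK_general μ hμ F Fs hderiv hFs_cont hinc hratio hint π hπ hFπ
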